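/- Let a ≥ 0, r ∈ ℕ₀, and fix x ∈ (0,∞). Then μ_{n,r}^a(x) = O(n^{−⌊(r+1)/2⌋}) as n → ∞; that is, there exist constants C > 0 and N ∈ ℕ such that |μ_{n,r}^a(x)| ≤ C·n^{−⌊(r+1)/2⌋} for all n ≥ N. -/

import Mathlib

open MeasureTheory Filter

noncomputable section

/-- Rising factorial `(n)_i = n(n+1)⋯(n+i-1)`, with `(n)_0 = 1`. -/
def risingFac (n : ℕ) : ℕ → ℝ
  | 0 => 1
  | i + 1 => risingFac n i * ((n : ℝ) + i)

/-- `P_k(n,a) = Σ_{i=0}^{k} C(k,i) (n)_i a^(k-i)`. -/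
def Pba (k n : ℕ) (a : ℝ) : ℝ :=
  ∑ i ∈ Finset.range (k + 1), (k.choose i : ℝ) * risingFac n i * a ^ (k - i)

/-- Generalized Baskakov basis function `W_{n,k}^a(x)`. -/
def Wgb (a : ℝ) (n k : ℕ) (x : ℝ) : ℝ :=
  Real.exp (-(a * x) / (1 + x)) * (Pba k n a / (Nat.factorial k : ℝ)) * x ^ k /
    (1 + x) ^ (n + k)

/-- Generalized Baskakov–Kantorovich operator `K_n^a(f;x)`. -/
def Kgb (a : ℝ) (n : ℕ) (f : ℝ → ℝ) (x : ℝ) : ℝ :=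
  ((n : ℝ) + 1) * ∑' k : ℕ,
    Wgb a n k x * ∫ t in ((k : ℝ) / ((n : ℝ) + 1))..(((k : ℝ) + 1) / ((n : ℝ) + 1)), f t


/-- `r`-th order central moment `μ_{n,r}^a(x)` of the generalized Baskakov operator. -/
def muMoment (a : ℝ) (n r : ℕ) (x : ℝ) : ℝ :=
  ∑' k : ℕ, Wgb a n k x * ((k : ℝ) / ((n : ℝ) + 1) - x) ^ r

open Finset Polynomial Asymptotics
open scoped Nat

/-!
Put `t = x / (1 + x)`. Then `W_{n,k}^a(x) = e^{-at} (1 - t)ⁿ P_k(n,a) tᵏ / k!`, and the exponential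
generating function of `P_k(n,a)` is `e^{as} (1 - s)⁻ⁿ`; so the weights sum to `1`, their
polynomial moments converge, and they satisfy `(k + 1) W_{n,k+1} = a t W_{n,k} + n x W_{n+1,k}`.
Shifting `k` with this identity gives a recursion for the central sums
`S_r(n) = ∑ₖ W_{n,k}^a(x) (k - at - nx)ʳ`, in which `S_r` itself enters only through
`n x (S_r(n + 1) - S_r(n))`. Hence `S_r` is a polynomial in `n` of degree at most `⌊r/2⌋`.
Finally `(n + 1)ʳ μ_{n,r}^a(x)` is a binomial combination of `S_0(n), …, S_r(n)`, so it is
`O(n^⌊r/2⌋)`, and `r - ⌊r/2⌋ = ⌊(r+1)/2⌋`.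
-/

section PolynomialSequence

variable {R : Type*} [CommRing R]

theorem Polynomial.natDegree_X_mul_taylor_one_sub_le (p : R[X]) :
    (X * (taylor 1 p - p)).natDegree ≤ p.natDegree := by
  rcases Nat.eq_zero_or_pos p.natDegree with hp | hp
  · obtain ⟨c, rfl⟩ := natDegree_eq_zero.1 hp
    simp
  · have hdiff : (taylor 1 p - p).natDegree ≤ p.natDegree - 1 :=
      natDegree_le_pred ((natDegree_sub_le _ _).trans (by simp))
        (by simp [coeff_taylor_natDegree])
    calc (X * (taylor 1 p - p)).natDegree ≤ 1 + (p.natDegree - 1) :=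
          natDegree_mul_le.trans (add_le_add natDegree_X_le hdiff)
      _ = p.natDegree := by omega

def IsPolyOfDegreeLE (f : ℕ → R) (d : ℕ) : Prop :=
  ∃ p : R[X], p.natDegree ≤ d ∧ ∀ n : ℕ, f n = p.eval (n : R)

namespace IsPolyOfDegreeLE

variable {f g : ℕ → R} {d e : ℕ}

theorem const (c : R) : IsPolyOfDegreeLE (fun _ ↦ c) 0 :=
  ⟨C c, by simp, fun _ ↦ by simp⟩

theorem natCast_sub_pow (m : R) (j : ℕ) : IsPolyOfDegreeLE (fun n ↦ ((n : R) - m) ^ j) j :=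
  ⟨(X - C m) ^ j, (natDegree_pow_le_of_le j (natDegree_X_sub_C_le m)).trans (by simp),
    fun n ↦ by simp⟩

theorem mono (hf : IsPolyOfDegreeLE f d) (hde : d ≤ e) : IsPolyOfDegreeLE f e :=
  let ⟨p, hp, hfp⟩ := hf
  ⟨p, hp.trans hde, hfp⟩

theorem add (hf : IsPolyOfDegreeLE f d) (hg : IsPolyOfDegreeLE g d) :
    IsPolyOfDegreeLE (fun n ↦ f n + g n) d :=
  let ⟨p, hp, hfp⟩ := hf
  let ⟨q, hq, hgq⟩ := hg
  ⟨p + q, (natDegree_add_le _ _).trans (max_le hp hq), fun n ↦ by simp [hfp, hgq]⟩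

theorem const_mul (hf : IsPolyOfDegreeLE f d) (c : R) :
    IsPolyOfDegreeLE (fun n ↦ c * f n) d :=
  let ⟨p, hp, hfp⟩ := hf
  ⟨C c * p, (natDegree_C_mul_le _ _).trans hp, fun n ↦ by simp [hfp]⟩

theorem sum {ι : Type*} (s : Finset ι) {f : ι → ℕ → R}
    (hf : ∀ i ∈ s, IsPolyOfDegreeLE (f i) d) :
    IsPolyOfDegreeLE (fun n ↦ ∑ i ∈ s, f i n) d := by
  choose! p hp hfp using hf
  exact ⟨∑ i ∈ s, p i, natDegree_sum_le_of_forall_le _ _ hp, fun n ↦ by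
    simp only [eval_finsetSum]
    exact Finset.sum_congr rfl fun i hi ↦ hfp i hi n⟩

theorem comp_succ (hf : IsPolyOfDegreeLE f d) : IsPolyOfDegreeLE (fun n ↦ f (n + 1)) d :=
  let ⟨p, hp, hfp⟩ := hf
  ⟨taylor 1 p, (natDegree_taylor p 1).le.trans hp, fun n ↦ by simp [hfp, taylor_eval]⟩

theorem natCast_mul (hf : IsPolyOfDegreeLE f d) :
    IsPolyOfDegreeLE (fun n ↦ (n : R) * f n) (d + 1) :=
  let ⟨p, hp, hfp⟩ := hf
  ⟨X * p, natDegree_mul_le.trans (by have := natDegree_X_le (R := R); omega),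
    fun n ↦ by simp [hfp]⟩

theorem natCast_mul_fwdDiff (hf : IsPolyOfDegreeLE f d) :
    IsPolyOfDegreeLE (fun n ↦ (n : R) * (f (n + 1) - f n)) d :=
  let ⟨p, hp, hfp⟩ := hf
  ⟨X * (taylor 1 p - p), (natDegree_X_mul_taylor_one_sub_le p).trans hp,
    fun n ↦ by simp [hfp, taylor_eval]⟩

theorem isBigO {f : ℕ → ℝ} (hf : IsPolyOfDegreeLE f d) :
    f =O[atTop] fun n ↦ (n : ℝ) ^ d := by
  obtain ⟨p, hp, hfp⟩ := hf
  have hdeg : p.degree ≤ (X ^ d : ℝ[X]).degree := by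
    rw [degree_X_pow]; exact (degree_le_natDegree).trans (by exact_mod_cast hp)
  have := (isBigO_atTop_of_degree_le p _ hdeg).comp_tendsto tendsto_natCast_atTop_atTop
  simpa [Function.comp_def, ← hfp] using this

end IsPolyOfDegreeLE

end PolynomialSequence

section RisingFactorial

theorem risingFac_nonneg (n i : ℕ) : 0 ≤ risingFac n i := by
  induction i with
  | zero => exact zero_le_one
  | succ i ih => exact mul_nonneg ih (by positivity)

theorem risingFac_succ_eq_mul (n i : ℕ) : risingFac n (i + 1) = n * risingFac (n + 1) i := by
  induction i with
  | zero => simp [risingFac]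
  | succ i ih =>
    rw [risingFac, ih, risingFac]
    push_cast
    ring

theorem risingFac_zero_left {i : ℕ} (hi : i ≠ 0) : risingFac 0 i = 0 := by
  obtain ⟨i, rfl⟩ := Nat.exists_eq_succ_of_ne_zero hi
  simp [risingFac_succ_eq_mul]

theorem risingFac_succ_div_factorial (n i : ℕ) :
    risingFac (n + 1) i / i ! = ∑ j ∈ range (i + 1), risingFac n j / j ! := by
  induction i with
  | zero => simp [risingFac]
  | succ i ih =>
    have hpascal :
        risingFac (n + 1) (i + 1) = (i + 1) * risingFac (n + 1) i + risingFac n (i + 1) := by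
      rw [risingFac, risingFac_succ_eq_mul]
      push_cast
      ring
    rw [sum_range_succ, ← ih, hpascal, Nat.factorial_succ]
    push_cast
    field_simp

-- Multiplying by `∑ tʲ = (1 - t)⁻¹` is, coefficientwise, `risingFac_succ_div_factorial`.
theorem hasSum_risingFac_mul_pow_div_factorial (m : ℕ) {t : ℝ} (ht₀ : 0 ≤ t) (ht₁ : t < 1) :
    HasSum (fun i ↦ risingFac m i * t ^ i / i !) ((1 - t)⁻¹ ^ m) := by
  have hnonneg : ∀ m i, 0 ≤ risingFac m i * t ^ i / i ! := fun m i ↦ by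
    have := risingFac_nonneg m i
    positivity
  induction m with
  | zero =>
    rw [pow_zero]
    convert hasSum_ite_eq 0 (1 : ℝ) using 2 with i
    rcases eq_or_ne i 0 with rfl | hi
    · simp [risingFac]
    · simp [risingFac_zero_left hi, hi]
  | succ m ih =>
    have hgeom := hasSum_geometric_of_lt_one ht₀ ht₁
    have hprod := hasSum_sum_range_mul_of_summable_norm
      (ih.summable.congr fun i ↦ (Real.norm_of_nonneg (hnonneg m i)).symm)
      (hgeom.summable.congr fun i ↦ (Real.norm_of_nonneg (by positivity)).symm)
    rw [ih.tsum_eq, hgeom.tsum_eq, ← pow_succ] at hprod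
    refine hprod.congr_fun fun i ↦ ?_
    rw [mul_div_right_comm, risingFac_succ_div_factorial, sum_mul]
    refine sum_congr rfl fun j hj ↦ ?_
    rw [← Nat.add_sub_of_le (Nat.lt_succ_iff.1 (mem_range.1 hj)), pow_add, Nat.add_sub_cancel_left]
    ring

end RisingFactorial

section BaskakovBasis

theorem Pba_succ (k n : ℕ) (a : ℝ) :
    Pba (k + 1) n a = a * Pba k n a + n * Pba k (n + 1) a := by
  have hsplit : ∀ i ∈ range (k + 2), ((k + 1).choose i : ℝ) * risingFac n i * a ^ (k + 1 - i)
      = (k.choose i : ℝ) * risingFac n i * a ^ (k + 1 - i)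
        + if i = 0 then 0 else (k.choose (i - 1) : ℝ) * risingFac n i * a ^ (k + 1 - i) := by
    rintro (_ | i) -
    · simp
    · simp only [Nat.choose_succ_succ', Nat.cast_add, Nat.succ_ne_zero, if_false,
        Nat.add_sub_cancel]
      ring
  rw [Pba, sum_congr rfl hsplit, sum_add_distrib]
  congr 1
  · rw [sum_range_succ, Nat.choose_succ_self, Pba, mul_sum]
    simp only [Nat.cast_zero, zero_mul, add_zero]
    refine sum_congr rfl fun i hi ↦ ?_
    rw [Nat.sub_add_comm (Nat.lt_succ_iff.1 (mem_range.1 hi)), pow_succ]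
    ring
  · rw [sum_range_succ', Pba, mul_sum]
    simp only [if_pos, add_zero, Nat.succ_ne_zero, if_false, Nat.add_sub_cancel,
      Nat.add_sub_add_right]
    refine sum_congr rfl fun i _ ↦ ?_
    rw [risingFac_succ_eq_mul]
    ring

theorem Pba_mul_pow_div_factorial (k n : ℕ) (a s : ℝ) :
    Pba k n a * s ^ k / k ! = ∑ i ∈ range (k + 1),
      risingFac n i * s ^ i / i ! * ((a * s) ^ (k - i) / (k - i)!) := by
  rw [Pba, sum_mul, sum_div]
  refine sum_congr rfl fun i hi ↦ ?_
  have hik : i ≤ k := Nat.lt_succ_iff.1 (mem_range.1 hi)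
  rw [Nat.cast_choose ℝ hik, ← Nat.add_sub_of_le hik, pow_add, Nat.add_sub_cancel_left]
  field_simp
  ring

theorem hasSum_Pba_mul_pow_div_factorial (n : ℕ) (a : ℝ) {s : ℝ} (hs₀ : 0 ≤ s) (hs₁ : s < 1) :
    HasSum (fun k ↦ Pba k n a * s ^ k / k !) ((1 - s)⁻¹ ^ n * Real.exp (a * s)) := by
  have hF := hasSum_risingFac_mul_pow_div_factorial n hs₀ hs₁
  have hE : HasSum (fun j ↦ (a * s) ^ j / j !) (Real.exp (a * s)) := by
    rw [Real.exp_eq_exp_ℝ]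
    exact NormedSpace.expSeries_div_hasSum_exp (a * s)
  have hF' : Summable fun i ↦ ‖risingFac n i * s ^ i / (i ! : ℝ)‖ :=
    hF.summable.congr fun i ↦ (Real.norm_of_nonneg (by
      have := risingFac_nonneg n i
      positivity)).symm
  have hE' : Summable fun j ↦ ‖(a * s) ^ j / (j ! : ℝ)‖ :=
    (Real.summable_pow_div_factorial |a * s|).congr fun j ↦ by
      rw [norm_div, norm_pow, Real.norm_eq_abs, RCLike.norm_natCast]
  have hprod := hasSum_sum_range_mul_of_summable_norm hF' hE'
  rw [hF.tsum_eq, hE.tsum_eq] at hprod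
  simpa only [Pba_mul_pow_div_factorial] using hprod

variable {a x : ℝ}

theorem Wgb_eq (hx : 1 + x ≠ 0) (n k : ℕ) :
    Wgb a n k x = Real.exp (-(a * (x / (1 + x)))) * (1 + x)⁻¹ ^ n *
      (Pba k n a * (x / (1 + x)) ^ k / k !) := by
  rw [Wgb, pow_add, div_pow, inv_pow, neg_div, mul_div_assoc]
  field_simp

theorem hasSum_Wgb (hx : 0 ≤ x) (n : ℕ) : HasSum (fun k ↦ Wgb a n k x) 1 := by
  have h1x : (0 : ℝ) < 1 + x := by positivity
  have ht₁ : x / (1 + x) < 1 := (div_lt_one h1x).2 (by linarith)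
  have hsum := (hasSum_Pba_mul_pow_div_factorial n a (by positivity) ht₁).mul_left
    (Real.exp (-(a * (x / (1 + x)))) * (1 + x)⁻¹ ^ n)
  have h1t : 1 - x / (1 + x) = (1 + x)⁻¹ := by field_simp; ring
  simp only [← Wgb_eq h1x.ne', h1t, inv_inv] at hsum
  have hone : Real.exp (-(a * (x / (1 + x)))) * (1 + x)⁻¹ ^ n *
      ((1 + x) ^ n * Real.exp (a * (x / (1 + x)))) = 1 := by
    rw [Real.exp_neg, inv_pow]
    field_simp
  rwa [hone] at hsum

theorem succ_mul_Wgb_succ (hx : 1 + x ≠ 0) (n k : ℕ) :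
    ((k : ℝ) + 1) * Wgb a n (k + 1) x
      = a * (x / (1 + x)) * Wgb a n k x + n * x * Wgb a (n + 1) k x := by
  rw [Wgb_eq hx, Wgb_eq hx, Wgb_eq hx, Pba_succ, Nat.factorial_succ, pow_succ, pow_succ]
  push_cast
  field_simp

theorem summable_Wgb_mul (hx : 0 ≤ x) (n : ℕ) {g : ℕ → ℝ} {d : ℕ}
    (hg : IsPolyOfDegreeLE g d) : Summable fun k ↦ Wgb a n k x * g k := by
  have ht₀ : 0 ≤ x / (1 + x) := by positivity
  have ht₁ : x / (1 + x) < 1 := (div_lt_one (by positivity)).2 (by linarith)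
  generalize ht : x / (1 + x) = t at ht₀ ht₁
  -- Compare with the generating series at the larger radius `s = (1 + t) / 2`.
  obtain ⟨s, hs⟩ : ∃ s, s = (1 + t) / 2 := ⟨_, rfl⟩
  have hs₀ : 0 < s := by rw [hs]; positivity
  have hts : |t / s| < 1 := by
    rw [abs_of_nonneg (by positivity), div_lt_one hs₀]
    linarith
  have hdecay : (fun k ↦ (t / s) ^ k * g k) =O[atTop] fun _ ↦ (1 : ℝ) :=
    ((isBigO_refl (fun k : ℕ ↦ (t / s) ^ k) atTop).mul hg.isBigO).trans <|
      ((tendsto_pow_const_mul_const_pow_of_abs_lt_one d hts).isBigO_one ℝ).congr_left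
        fun k ↦ mul_comm _ _
  have hW : (fun k ↦ Wgb a n k x * g k) = fun k ↦ Pba k n a * s ^ k / k ! *
      (Real.exp (-(a * t)) * (1 + x)⁻¹ ^ n * ((t / s) ^ k * g k)) := by
    funext k
    rw [Wgb_eq (by positivity), ht, div_pow]
    field_simp
  rw [hW]
  refine summable_of_isBigO_nat
    (hasSum_Pba_mul_pow_div_factorial n a hs₀.le (by linarith)).summable ?_
  simpa using (isBigO_refl (fun k : ℕ ↦ Pba k n a * s ^ k / k !) atTop).mul
    (hdecay.const_mul_left (Real.exp (-(a * t)) * (1 + x)⁻¹ ^ n))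

theorem tsum_natCast_mul_Wgb (hx : 0 ≤ x) (n : ℕ) {g : ℕ → ℝ} {d : ℕ}
    (hg : IsPolyOfDegreeLE g d) :
    ∑' k : ℕ, (k : ℝ) * (Wgb a n k x * g k)
      = a * (x / (1 + x)) * ∑' k : ℕ, Wgb a n k x * g (k + 1)
        + n * x * ∑' k : ℕ, Wgb a (n + 1) k x * g (k + 1) := by
  have hsummable : Summable fun k : ℕ ↦ (k : ℝ) * (Wgb a n k x * g k) := by
    simpa only [mul_left_comm] using summable_Wgb_mul (a := a) hx n hg.natCast_mul
  rw [hsummable.tsum_eq_zero_add, ← (summable_Wgb_mul hx n hg.comp_succ).tsum_mul_left,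
    ← (summable_Wgb_mul hx (n + 1) hg.comp_succ).tsum_mul_left,
    ← Summable.tsum_add (((summable_Wgb_mul hx n hg.comp_succ).mul_left _))
      ((summable_Wgb_mul hx (n + 1) hg.comp_succ).mul_left _)]
  simp only [Nat.cast_zero, zero_mul, zero_add]
  refine tsum_congr fun k ↦ ?_
  push_cast
  linear_combination g (k + 1) * succ_mul_Wgb_succ (a := a) (by positivity) n k

theorem tsum_Wgb_mul_sub_add_pow (hx : 0 ≤ x) (n r : ℕ) (m c : ℝ) :
    ∑' k : ℕ, Wgb a n k x * ((k : ℝ) - m + c) ^ r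
      = ∑ j ∈ range (r + 1), (r.choose j : ℝ) * c ^ (r - j) *
          ∑' k : ℕ, Wgb a n k x * ((k : ℝ) - m) ^ j := by
  simp_rw [add_pow, mul_sum]
  rw [Summable.tsum_finsetSum fun j _ ↦ ?_]
  · refine sum_congr rfl fun j _ ↦ ?_
    rw [← tsum_mul_left]
    exact tsum_congr fun k ↦ by ring
  · exact ((summable_Wgb_mul hx n (IsPolyOfDegreeLE.natCast_sub_pow m j)).mul_left
      (r.choose j * c ^ (r - j))).congr fun k ↦ by ring

end BaskakovBasis

-- `a x / (1 + x) + n x` is the mean `∑ₖ k W_{n,k}^a(x)`: these are the central moments of the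
-- weights in the unscaled variable `k`.
def centralSum (a x : ℝ) (r n : ℕ) : ℝ :=
  ∑' k : ℕ, Wgb a n k x * ((k : ℝ) - (a * (x / (1 + x)) + n * x)) ^ r

section CentralSums

variable {a x : ℝ}

theorem centralSum_zero (hx : 0 ≤ x) (n : ℕ) : centralSum a x 0 n = 1 := by
  simpa [centralSum] using (hasSum_Wgb hx n).tsum_eq

theorem centralSum_succ (hx : 0 ≤ x) (r n : ℕ) :
    centralSum a x (r + 1) n
      = x * (n * (centralSum a x r (n + 1) - centralSum a x r n))
        + ∑ j ∈ range r, a * (x / (1 + x)) * r.choose j * centralSum a x j n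
        + ∑ j ∈ range r, x * (r.choose j * (1 + x) ^ (r - j)) * (n * centralSum a x j (n + 1)) := by
  set m := a * (x / (1 + x)) + n * x with hm
  have hpoly := IsPolyOfDegreeLE.natCast_sub_pow m r
  have hsplit : centralSum a x (r + 1) n
      = ∑' k : ℕ, (k : ℝ) * (Wgb a n k x * ((k : ℝ) - m) ^ r) - m * centralSum a x r n := by
    rw [centralSum, centralSum, ← hm, ← tsum_mul_left, ← Summable.tsum_sub
      (summable_Wgb_mul hx n hpoly.natCast_mul |>.congr fun k ↦ by ring)
      ((summable_Wgb_mul hx n hpoly).mul_left m)]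
    exact tsum_congr fun k ↦ by ring
  -- After the index shift, expand `(k + 1 - m)ʳ` around the means `m` and `m + x` of `W_{n,·}`
  -- and `W_{n+1,·}`; the top-degree terms then combine into a forward difference.
  have hshift₀ : ∑' k : ℕ, Wgb a n k x * ((k + 1 : ℕ) - m) ^ r
      = ∑ j ∈ range (r + 1), (r.choose j : ℝ) * centralSum a x j n := by
    simpa [centralSum, ← hm, add_sub_right_comm] using tsum_Wgb_mul_sub_add_pow hx n r m 1
  have hshift₁ : ∑' k : ℕ, Wgb a (n + 1) k x * ((k + 1 : ℕ) - m) ^ r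
      = ∑ j ∈ range (r + 1), (r.choose j : ℝ) * (1 + x) ^ (r - j) * centralSum a x j (n + 1) := by
    have := tsum_Wgb_mul_sub_add_pow (a := a) hx (n + 1) r (m + x) (1 + x)
    simp only [centralSum, hm, Nat.cast_add, Nat.cast_one] at this ⊢
    convert this using 3 with k
    · ring
    · simp only [add_mul, one_mul, add_assoc]
  have hfactor₀ : ∑ j ∈ range r, a * (x / (1 + x)) * r.choose j * centralSum a x j n
      = a * (x / (1 + x)) * ∑ j ∈ range r, (r.choose j : ℝ) * centralSum a x j n := by
    rw [mul_sum]
    exact sum_congr rfl fun j _ ↦ by ring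
  have hfactor₁ :
      ∑ j ∈ range r, x * (r.choose j * (1 + x) ^ (r - j)) * (n * centralSum a x j (n + 1))
      = n * x * ∑ j ∈ range r, (r.choose j : ℝ) * (1 + x) ^ (r - j) * centralSum a x j (n + 1) := by
    rw [mul_sum]
    exact sum_congr rfl fun j _ ↦ by ring
  rw [hsplit, tsum_natCast_mul_Wgb hx n hpoly, hshift₀, hshift₁, sum_range_succ, sum_range_succ,
    hfactor₀, hfactor₁, Nat.choose_self, Nat.sub_self, hm]
  ring

theorem isPolyOfDegreeLE_centralSum (hx : 0 ≤ x) (r : ℕ) :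
    IsPolyOfDegreeLE (centralSum a x r) (r / 2) := by
  induction r using Nat.strong_induction_on with
  | _ r ih =>
    rcases r with _ | r
    · simpa only [funext (centralSum_zero (a := a) hx)] using IsPolyOfDegreeLE.const (1 : ℝ)
    · rw [funext (centralSum_succ hx r)]
      refine .add (.add ?_ (.sum _ fun j hj ↦ ?_)) (.sum _ fun j hj ↦ ?_)
      · exact ((ih r r.lt_succ_self).natCast_mul_fwdDiff.const_mul x).mono (by omega)
      · have hjr := mem_range.1 hj
        exact ((ih j (by omega)).const_mul _).mono (by omega)
      · have hjr := mem_range.1 hj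
        exact ((ih j (by omega)).comp_succ.natCast_mul.const_mul _).mono (by omega)

theorem muMoment_mul_pow_eq (hx : 0 ≤ x) (n r : ℕ) :
    muMoment a n r x * ((n : ℝ) + 1) ^ r
      = ∑ j ∈ range (r + 1), (r.choose j : ℝ) * (a * (x / (1 + x)) - x) ^ (r - j) *
          centralSum a x j n := by
  rw [muMoment, ← tsum_mul_right]
  refine (tsum_congr fun k ↦ ?_).trans
    (tsum_Wgb_mul_sub_add_pow hx n r (a * (x / (1 + x)) + n * x) (a * (x / (1 + x)) - x))
  rw [mul_assoc, ← mul_pow]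
  congr 2
  field_simp
  ring

theorem isPolyOfDegreeLE_muMoment_mul_pow (hx : 0 ≤ x) (r : ℕ) :
    IsPolyOfDegreeLE (fun n ↦ muMoment a n r x * ((n : ℝ) + 1) ^ r) (r / 2) := by
  simp only [muMoment_mul_pow_eq hx]
  exact .sum _ fun j hj ↦
    ((isPolyOfDegreeLE_centralSum hx j).const_mul _).mono (by have := mem_range.1 hj; omega)

end CentralSums

theorem statement14_general (a : ℝ) (r : ℕ) (x : ℝ) (hx : 0 < x) :
    ∃ C > (0 : ℝ), ∃ N : ℕ, ∀ n ≥ N,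
      |muMoment a n r x| ≤ C / (n : ℝ) ^ ((r + 1) / 2) := by
  obtain ⟨C, hC, hbound⟩ := (isPolyOfDegreeLE_muMoment_mul_pow (a := a) hx.le r).isBigO.exists_pos
  obtain ⟨N, hN⟩ := eventually_atTop.1 hbound.bound
  refine ⟨C, hC, max N 1, fun n hn ↦ ?_⟩
  have hn₀ : (0 : ℝ) < n := by exact_mod_cast (le_of_max_le_right hn)
  have hmul := hN n (le_of_max_le_left hn)
  rw [norm_mul, norm_pow, norm_pow, Real.norm_natCast, Real.norm_eq_abs, Real.norm_eq_abs,
    abs_of_pos (by positivity : (0 : ℝ) < n + 1)] at hmul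
  have hpow : (n : ℝ) ^ (r / 2) * (n : ℝ) ^ ((r + 1) / 2) ≤ ((n : ℝ) + 1) ^ r := by
    rw [← pow_add, show r / 2 + (r + 1) / 2 = r by omega]
    exact pow_le_pow_left₀ hn₀.le (by linarith) r
  rw [le_div_iff₀ (by positivity)]
  nlinarith [abs_nonneg (muMoment a n r x), pow_pos hn₀ ((r + 1) / 2), pow_pos hn₀ (r / 2)]

/-- `μ_{n,r}^a(x) = O(n^{−⌊(r+1)/2⌋})` as `n → ∞`
(here `(r+1)/2` is the natural-number floor `⌊(r+1)/2⌋`). -/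
theorem statement14 (a : ℝ) (ha : 0 ≤ a) (r : ℕ) (x : ℝ) (hx : 0 < x) :
    ∃ C > (0 : ℝ), ∃ N : ℕ, ∀ n ≥ N,
      |muMoment a n r x| ≤ C / (n : ℝ) ^ ((r + 1) / 2) :=
  statement14_general a r x hx
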